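/- Let W_1,…,W_L be d×d real matrices and ρ_1,…,ρ_L real numbers. Suppose u_i^{(l)}, v_i^{(l)} ∈ ℝ^d (l ∈ {1,…,L}, i ∈ {1,…,m}) are such that each family {u_i^{(l)}}_{i=1}^m and {v_i^{(l)}}_{i=1}^m is orthonormal, v_i^{(l+1)} = u_i^{(l)} for l ∈ {1,…,L−1}, and for every l and i: (A) W_l·v_i^{(l)} = ρ_l·u_i^{(l)}; (B) W_lᵀ·u_i^{(l)} = ρ_l·v_i^{(l)}; (C) Φᵀ·(W_L⋯W_{l+1})·u_i^{(l)} = 0; (D) Φ·(W_{l−1}⋯W_1)ᵀ·v_i^{(l)} = 0, where empty products equal I_d. Define, for each l, W'_l := (1 − ηλ)·W_l − η·(W_L⋯W_{l+1})ᵀ·(W_L⋯W_1 − Φ)·(W_{l−1}⋯W_1)ᵀ and ρ'_l := ρ_l·(1 − ηλ − η·∏_{k≠l} ρ_k²). Then (A), (B), (C), (D) hold with W'_l in place of W_l and ρ'_l in place of ρ_l, with the same vectors u_i^{(l)}, v_i^{(l)}. -/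
import Mathlib


open Matrix BigOperators Filter

noncomputable section

/-- Auxiliary: product of `k` consecutive matrices ending (on the right) at index `i`. -/
def chainAux {n : Type*} [Fintype n] [DecidableEq n]
    (W : ℕ → Matrix n n ℝ) (i : ℕ) : ℕ → Matrix n n ℝ
  | 0 => 1
  | (k+1) => W (i + k) * chainAux W i k

/-- `chain W i j = W j * W (j-1) * ⋯ * W i`; equals `1` when `j < i` (empty product). -/
def chain {n : Type*} [Fintype n] [DecidableEq n]
    (W : ℕ → Matrix n n ℝ) (i j : ℕ) : Matrix n n ℝ :=
  chainAux W i (j + 1 - i)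

/-- `blockDiag r m A B` is the `(2r+m)×(2r+m)` block-diagonal matrix `diag(A, B)`
with top-left block `A` (of size `2r×2r`) and bottom-right block `B` (of size `m×m`). -/
def blockDiag (r m : ℕ) (A : Matrix (Fin (2*r)) (Fin (2*r)) ℝ)
    (B : Matrix (Fin m) (Fin m) ℝ) : Matrix (Fin (2*r + m)) (Fin (2*r + m)) ℝ :=
  Matrix.reindex finSumFinEquiv finSumFinEquiv (Matrix.fromBlocks A 0 0 B)

/-- The `d×2r` matrix formed by the first `2r` columns of a `(2r+m)×(2r+m)` matrix. -/
def cols1 (r m : ℕ) (U : Matrix (Fin (2*r + m)) (Fin (2*r + m)) ℝ) :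
    Matrix (Fin (2*r + m)) (Fin (2*r)) ℝ :=
  fun i j => U i (Fin.castAdd m j)

/-- The `d×m` matrix formed by the last `m` columns of a `(2r+m)×(2r+m)` matrix. -/
def cols2 (r m : ℕ) (U : Matrix (Fin (2*r + m)) (Fin (2*r + m)) ℝ) :
    Matrix (Fin (2*r + m)) (Fin m) ℝ :=
  fun i j => U i (Fin.natAdd (2*r) j)

/-- Squared Frobenius norm: `‖A‖_F² = trace(AᵀA)`. -/
def frobSq {p q : Type*} [Fintype p] [Fintype q] (A : Matrix p q ℝ) : ℝ :=
  Matrix.trace (Aᵀ * A)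

/-- Frobenius norm: `‖A‖_F = √(trace(AᵀA))`. -/
def frobNorm {p q : Type*} [Fintype p] [Fintype q] (A : Matrix p q ℝ) : ℝ :=
  Real.sqrt (Matrix.trace (Aᵀ * A))

namespace Statement7Aux

variable {d L m : ℕ}

lemma prod_Icc_bot (f : ℕ → ℝ) {a b : ℕ} (h : a ≤ b) :
    ∏ k ∈ Finset.Icc a b, f k = f a * ∏ k ∈ Finset.Icc (a+1) b, f k := by
  rw [show Finset.Icc a b = insert a (Finset.Icc (a+1) b) by
      ext x; simp only [Finset.mem_Icc, Finset.mem_insert]; omega,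
    Finset.prod_insert (by simp only [Finset.mem_Icc]; omega)]

lemma chain_eq_one (W : ℕ → Matrix (Fin d) (Fin d) ℝ) {i j : ℕ} (h : j < i) :
    chain W i j = 1 := by
  unfold chain
  have h0 : j + 1 - i = 0 := by omega
  rw [h0]
  rfl

lemma chain_self (W : ℕ → Matrix (Fin d) (Fin d) ℝ) (j : ℕ) :
    chain W j j = W j := by
  unfold chain
  have h0 : j + 1 - j = 1 := by omega
  rw [h0]
  show W (j + 0) * 1 = W j
  simp

lemma chainAux_succ (W : ℕ → Matrix (Fin d) (Fin d) ℝ) (i : ℕ) :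
    ∀ k, chainAux W i (k+1) = chainAux W (i+1) k * W i := by
  intro k
  induction k with
  | zero =>
      show W (i + 0) * 1 = 1 * W i
      simp
  | succ k ih =>
      show W (i + (k+1)) * chainAux W i (k+1) = chainAux W (i+1) (k+1) * W i
      rw [ih]
      have hidx : i + (k+1) = (i+1) + k := by omega
      rw [hidx]
      show W ((i+1) + k) * (chainAux W (i+1) k * W i)
        = W ((i+1) + k) * chainAux W (i+1) k * W i
      rw [mul_assoc]

lemma chain_top (W : ℕ → Matrix (Fin d) (Fin d) ℝ) {i j : ℕ} (h : i ≤ j + 1) :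
    chain W i (j+1) = W (j+1) * chain W i j := by
  unfold chain
  have h1 : j + 1 + 1 - i = (j + 1 - i) + 1 := by omega
  rw [h1]
  show W (i + (j + 1 - i)) * chainAux W i (j + 1 - i) = _
  have h2 : i + (j + 1 - i) = j + 1 := by omega
  rw [h2]

lemma chain_bot (W : ℕ → Matrix (Fin d) (Fin d) ℝ) {i j : ℕ} (h : i ≤ j) :
    chain W i j = chain W (i+1) j * W i := by
  unfold chain
  have h1 : j + 1 - i = (j + 1 - (i+1)) + 1 := by omega
  rw [h1, chainAux_succ]

section Vec

variable (W : ℕ → Matrix (Fin d) (Fin d) ℝ) (ρ : ℕ → ℝ)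
  (u v : ℕ → Fin m → (Fin d → ℝ))
  (huv : ∀ l, 1 ≤ l → l + 1 ≤ L → ∀ i, v (l+1) i = u l i)

include huv

section A
variable (hA : ∀ l, 1 ≤ l → l ≤ L → ∀ i, (W l) *ᵥ (v l i) = ρ l • u l i)
include hA

lemma chain_up (i : Fin m) (l : ℕ) (hl : 1 ≤ l) :
    ∀ j, l ≤ j → j ≤ L →
      chain W (l+1) j *ᵥ u l i = (∏ k ∈ Finset.Icc (l+1) j, ρ k) • u j i := by
  intro j
  induction j with
  | zero => intro h1 _; omega
  | succ j ih =>
      intro hlj hjL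
      rcases Nat.lt_or_ge j l with hc | hc
      · -- l = j + 1
        have hlj' : l = j + 1 := by omega
        subst hlj'
        rw [chain_eq_one W (by omega), Matrix.one_mulVec,
          Finset.Icc_eq_empty (by omega), Finset.prod_empty, one_smul]
      · -- l ≤ j
        rw [chain_top W (by omega), ← Matrix.mulVec_mulVec, ih hc (by omega),
          Matrix.mulVec_smul]
        have hvj : u j i = v (j+1) i := (huv j (by omega) (by omega) i).symm
        rw [hvj, hA (j+1) (by omega) hjL i, Finset.prod_Icc_succ_top (by omega),
          smul_smul]

/-- going up from the bottom using `v 1`. -/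
lemma chain_upV (i : Fin m) :
    ∀ j, 1 ≤ j → j ≤ L →
      chain W 1 j *ᵥ v 1 i = (∏ k ∈ Finset.Icc 1 j, ρ k) • u j i := by
  intro j
  induction j with
  | zero => intro h1 _; omega
  | succ j ih =>
      intro _ hjL
      rcases Nat.lt_or_ge j 1 with hc | hc
      · have hj0 : j = 0 := by omega
        subst hj0
        rw [chain_self, hA 1 le_rfl hjL i]
        simp
      · rw [chain_top W (by omega), ← Matrix.mulVec_mulVec, ih hc (by omega),
          Matrix.mulVec_smul]
        have hvj : u j i = v (j+1) i := (huv j hc (by omega) i).symm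
        rw [hvj, hA (j+1) (by omega) hjL i, Finset.prod_Icc_succ_top (by omega),
          smul_smul]

end A

section B
variable (hB : ∀ l, 1 ≤ l → l ≤ L → ∀ i, (W l)ᵀ *ᵥ (u l i) = ρ l • v l i)
include hB

/-- going down from level `l` using transposes, acting on `v l`. -/
lemma chain_down (i : Fin m) (l : ℕ) (hl : 1 ≤ l) (hlL : l ≤ L) :
    ∀ t j, j + t = l → 1 ≤ j →
      (chain W j (l-1))ᵀ *ᵥ v l i = (∏ k ∈ Finset.Icc j (l-1), ρ k) • v j i := by
  intro t
  induction t with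
  | zero =>
      intro j hj _
      have hjl : j = l := by omega
      subst hjl
      rw [chain_eq_one W (by omega), Matrix.transpose_one, Matrix.one_mulVec,
        Finset.Icc_eq_empty (by omega), Finset.prod_empty, one_smul]
  | succ t ih =>
      intro j hj hj1
      have hjl : j < l := by omega
      rw [chain_bot W (show j ≤ l - 1 by omega), Matrix.transpose_mul,
        ← Matrix.mulVec_mulVec, ih (j+1) (by omega) (by omega), Matrix.mulVec_smul]
      have hvj : v (j+1) i = u j i := huv j hj1 (by omega) i
      rw [hvj, hB j hj1 (by omega) i, smul_smul]
      congr 1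
      rw [prod_Icc_bot ρ (show j ≤ l - 1 by omega), mul_comm]

/-- going down from the top using transposes, acting on `u L`. -/
lemma chain_downU (hL1 : 1 ≤ L) (i : Fin m) :
    ∀ t j, j + t = L → 1 ≤ j →
      (chain W j L)ᵀ *ᵥ u L i = (∏ k ∈ Finset.Icc j L, ρ k) • v j i := by
  intro t
  induction t with
  | zero =>
      intro j hj _
      have hjl : j = L := by omega
      subst hjl
      rw [chain_self, hB j hL1 le_rfl i]
      simp
  | succ t ih =>
      intro j hj hj1
      have hjl : j < L := by omega
      rw [chain_bot W (show j ≤ L by omega), Matrix.transpose_mul,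
        ← Matrix.mulVec_mulVec, ih (j+1) (by omega) (by omega), Matrix.mulVec_smul]
      have hvj : v (j+1) i = u j i := huv j hj1 (by omega) i
      rw [hvj, hB j hj1 (by omega) i, smul_smul]
      congr 1
      rw [prod_Icc_bot ρ (show j ≤ L by omega), mul_comm]

end B

end Vec

end Statement7Aux

open Statement7Aux in
/-- inductive step of Lemma 1 over time: if properties (A)–(D)
hold for weights `W_l` with scalars `ρ_l`, then they hold after one gradient-descent
update, with `ρ'_l = ρ_l·(1 − ηλ − η·∏_{k≠l} ρ_k²)`. -/
theorem statement7
    (d : ℕ) (hd : 1 ≤ d) (L : ℕ) (hL : 1 ≤ L) (m : ℕ) (hm : 1 ≤ m)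
    (Φ : Matrix (Fin d) (Fin d) ℝ)
    (η lam : ℝ) (hη : 0 < η) (hlam : 0 ≤ lam)
    (W : ℕ → Matrix (Fin d) (Fin d) ℝ) (ρ : ℕ → ℝ)
    (u v : ℕ → Fin m → (Fin d → ℝ))
    (hu : ∀ l, 1 ≤ l → l ≤ L → ∀ i j, u l i ⬝ᵥ u l j = if i = j then (1:ℝ) else 0)
    (hv : ∀ l, 1 ≤ l → l ≤ L → ∀ i j, v l i ⬝ᵥ v l j = if i = j then (1:ℝ) else 0)
    (huv : ∀ l, 1 ≤ l → l + 1 ≤ L → ∀ i, v (l+1) i = u l i)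
    (hA : ∀ l, 1 ≤ l → l ≤ L → ∀ i, (W l) *ᵥ (v l i) = ρ l • u l i)
    (hB : ∀ l, 1 ≤ l → l ≤ L → ∀ i, (W l)ᵀ *ᵥ (u l i) = ρ l • v l i)
    (hC : ∀ l, 1 ≤ l → l ≤ L → ∀ i, Φᵀ *ᵥ ((chain W (l+1) L) *ᵥ (u l i)) = 0)
    (hD : ∀ l, 1 ≤ l → l ≤ L → ∀ i, Φ *ᵥ ((chain W 1 (l-1))ᵀ *ᵥ (v l i)) = 0)
    (W' : ℕ → Matrix (Fin d) (Fin d) ℝ) (ρ' : ℕ → ℝ)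
    (hW' : ∀ l, W' l = (1 - η * lam) • W l
      - η • ((chain W (l+1) L)ᵀ * (chain W 1 L - Φ) * (chain W 1 (l-1))ᵀ))
    (hρ' : ∀ l, ρ' l = ρ l * (1 - η * lam - η * ∏ k ∈ (Finset.Icc 1 L).erase l, (ρ k)^2)) :
    ∀ l, 1 ≤ l → l ≤ L → ∀ i,
      (W' l) *ᵥ (v l i) = ρ' l • u l i ∧
      (W' l)ᵀ *ᵥ (u l i) = ρ' l • v l i ∧
      Φᵀ *ᵥ ((chain W' (l+1) L) *ᵥ (u l i)) = 0 ∧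
      Φ *ᵥ ((chain W' 1 (l-1))ᵀ *ᵥ (v l i)) = 0 := by
  have hPhiV : ∀ i, Φ *ᵥ v 1 i = 0 := by
    intro i
    have h := hD 1 le_rfl hL i
    rwa [show (1:ℕ) - 1 = 0 from rfl, chain_eq_one W (by omega), Matrix.transpose_one,
      Matrix.one_mulVec] at h
  have hPhiU : ∀ i, Φᵀ *ᵥ u L i = 0 := by
    intro i
    have h := hC L hL le_rfl i
    rwa [chain_eq_one W (by omega), Matrix.one_mulVec] at h
  have key : ∀ l, 1 ≤ l → l ≤ L → ∀ i,
      (W' l) *ᵥ (v l i) = ρ' l • u l i ∧ (W' l)ᵀ *ᵥ (u l i) = ρ' l • v l i := by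
    intro l hl1 hlL i
    have hsplit : (∏ k ∈ Finset.Icc 1 L, ρ k)
        = (∏ k ∈ Finset.Icc 1 (l-1), ρ k) * (ρ l * ∏ k ∈ Finset.Icc (l+1) L, ρ k) := by
      rw [show Finset.Icc 1 L = Finset.Icc 1 (l-1) ∪ Finset.Icc l L by
          ext x; simp only [Finset.mem_Icc, Finset.mem_union]; omega,
        Finset.prod_union (by
          rw [Finset.disjoint_left]; intro a ha hb
          simp only [Finset.mem_Icc] at ha hb; omega),
        prod_Icc_bot ρ hlL]
    have herase : (∏ k ∈ (Finset.Icc 1 L).erase l, (ρ k)^2)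
        = (∏ k ∈ Finset.Icc 1 (l-1), ρ k)^2 * (∏ k ∈ Finset.Icc (l+1) L, ρ k)^2 := by
      rw [show (Finset.Icc 1 L).erase l = Finset.Icc 1 (l-1) ∪ Finset.Icc (l+1) L by
          ext x; simp only [Finset.mem_erase, Finset.mem_Icc, Finset.mem_union]; omega,
        Finset.prod_union (by
          rw [Finset.disjoint_left]; intro a ha hb
          simp only [Finset.mem_Icc] at ha hb; omega),
        Finset.prod_pow, Finset.prod_pow]
    have h1 : (chain W 1 (l-1))ᵀ *ᵥ v l i
        = (∏ k ∈ Finset.Icc 1 (l-1), ρ k) • v 1 i :=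
      chain_down W ρ u v huv hB i l hl1 hlL (l-1) 1 (by omega) le_rfl
    have h2 : chain W 1 L *ᵥ v 1 i = (∏ k ∈ Finset.Icc 1 L, ρ k) • u L i :=
      chain_upV W ρ u v huv hA i L hL le_rfl
    have h3 : (chain W (l+1) L)ᵀ *ᵥ u L i
        = (∏ k ∈ Finset.Icc (l+1) L, ρ k) • u l i := by
      rcases Nat.lt_or_ge l L with hlt | hge
      · have h := chain_downU W ρ u v huv hB hL i (L - (l+1)) (l+1) (by omega) (by omega)
        rw [h, huv l hl1 (by omega) i]
      · have hlL' : l = L := by omega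
        subst hlL'
        rw [chain_eq_one W (by omega), Matrix.transpose_one, Matrix.one_mulVec,
          Finset.Icc_eq_empty (by omega), Finset.prod_empty, one_smul]
    have h4 : chain W (l+1) L *ᵥ u l i
        = (∏ k ∈ Finset.Icc (l+1) L, ρ k) • u L i :=
      chain_up W ρ u v huv hA i l hl1 L hlL le_rfl
    have h5 : (chain W 1 L)ᵀ *ᵥ u L i = (∏ k ∈ Finset.Icc 1 L, ρ k) • v 1 i :=
      chain_downU W ρ u v huv hB hL i (L-1) 1 (by omega) le_rfl
    have h6 : chain W 1 (l-1) *ᵥ v 1 i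
        = (∏ k ∈ Finset.Icc 1 (l-1), ρ k) • v l i := by
      rcases Nat.lt_or_ge 1 l with hlt | hge
      · have h := chain_upV W ρ u v huv hA i (l-1) (by omega) (by omega)
        have hll : l - 1 + 1 = l := by omega
        have hvu : u (l-1) i = v l i := by
          have := huv (l-1) (by omega) (by omega) i
          rw [hll] at this; exact this.symm
        rw [h, hvu]
      · have hl' : l = 1 := by omega
        subst hl'
        rw [show (1:ℕ) - 1 = 0 from rfl, chain_eq_one W (by omega), Matrix.one_mulVec,
          Finset.Icc_eq_empty (by omega), Finset.prod_empty, one_smul]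
    constructor
    · rw [hW' l, Matrix.sub_mulVec, Matrix.smul_mulVec, hA l hl1 hlL i,
        Matrix.smul_mulVec, ← Matrix.mulVec_mulVec, ← Matrix.mulVec_mulVec, h1,
        Matrix.mulVec_smul, Matrix.sub_mulVec, h2, hPhiV i, sub_zero,
        Matrix.mulVec_smul, Matrix.mulVec_smul, h3,
        smul_smul, smul_smul, smul_smul, smul_smul, ← sub_smul]
      congr 1
      rw [hρ' l, herase, hsplit]
      ring
    · rw [hW' l, Matrix.transpose_sub, Matrix.transpose_smul,
        Matrix.transpose_smul, Matrix.transpose_mul, Matrix.transpose_mul,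
        Matrix.transpose_transpose, Matrix.transpose_transpose,
        Matrix.sub_mulVec, Matrix.smul_mulVec, hB l hl1 hlL i,
        Matrix.smul_mulVec, ← Matrix.mulVec_mulVec, ← Matrix.mulVec_mulVec,
        Matrix.transpose_sub, h4,
        Matrix.mulVec_smul, Matrix.sub_mulVec, h5, hPhiU i, sub_zero,
        Matrix.mulVec_smul, Matrix.mulVec_smul, h6,
        smul_smul, smul_smul, smul_smul, smul_smul, ← sub_smul]
      congr 1
      rw [hρ' l, herase, hsplit]
      ring
  have hA' : ∀ l, 1 ≤ l → l ≤ L → ∀ i, (W' l) *ᵥ (v l i) = ρ' l • u l i :=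
    fun l h1 h2 i => (key l h1 h2 i).1
  have hB' : ∀ l, 1 ≤ l → l ≤ L → ∀ i, (W' l)ᵀ *ᵥ (u l i) = ρ' l • v l i :=
    fun l h1 h2 i => (key l h1 h2 i).2
  intro l hl1 hlL i
  refine ⟨hA' l hl1 hlL i, hB' l hl1 hlL i, ?_, ?_⟩
  · rw [chain_up W' ρ' u v huv hA' i l hl1 L hlL le_rfl, Matrix.mulVec_smul,
      hPhiU i, smul_zero]
  · rw [chain_down W' ρ' u v huv hB' i l hl1 hlL (l-1) 1 (by omega) le_rfl,
      Matrix.mulVec_smul, hPhiV i, smul_zero]
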